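/- Fix β ∈ (−1, 1]. For all real numbers a > 0, b > 0, c, d, f, the alternating bilinear map [·,·] on ℝ⁴ determined on the standard basis f₁, f₂, f₃, f₄ by [f₁,f₄] = a(1+β)f₁, [f₂,f₃] = b f₁, [f₂,f₄] = c f₁ + a f₂, [f₃,f₄] = d f₁ + f(1−β) f₂ + aβ f₃, [f₁,f₂] = [f₁,f₃] = 0 satisfies the Jacobi identity, and the resulting Lie algebra is isomorphic (as a real Lie algebra) to A_{4,9}^β. -/

import Mathlib

noncomputable section

/-- The alternating bilinear bracket on `ℝ⁴` determined on the standard basis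
`f₁, f₂, f₃, f₄` by `[f₁,f₄] = a(1+β)f₁`, `[f₂,f₃] = b f₁`, `[f₂,f₄] = c f₁ + a f₂`,
`[f₃,f₄] = d f₁ + f(1-β) f₂ + aβ f₃`, `[f₁,f₂] = [f₁,f₃] = 0`. -/
def A49bracket (β a b c d f : ℝ) (x y : Fin 4 → ℝ) : Fin 4 → ℝ :=
  ![a * (1 + β) * (x 0 * y 3 - x 3 * y 0) + b * (x 1 * y 2 - x 2 * y 1)
      + c * (x 1 * y 3 - x 3 * y 1) + d * (x 2 * y 3 - x 3 * y 2),
    a * (x 1 * y 3 - x 3 * y 1) + f * (1 - β) * (x 2 * y 3 - x 3 * y 2),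
    a * β * (x 2 * y 3 - x 3 * y 2),
    0]

set_option maxHeartbeats 1000000 in
/-- Lemma 1, converse direction. Fix `β ∈ (-1, 1]` and reals
`a > 0`, `b > 0`, `c`, `d`, `f`. The bracket `A49bracket β a b c d f` is antisymmetric,
satisfies the Jacobi identity, and the resulting Lie algebra is isomorphic to
`A_{4,9}^β` (the Lie algebra with basis `e₁,…,e₄` and nonzero brackets `[e₂,e₃] = e₁`,
`[e₁,e₄] = (1+β)e₁`, `[e₂,e₄] = e₂`, `[e₃,e₄] = βe₃`). -/
theorem A49bracket_jacobi_and_iso (β a b c d f : ℝ) (hβ : -1 < β ∧ β ≤ 1)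
    (ha : 0 < a) (hb : 0 < b) :
    (∀ x y, A49bracket β a b c d f x y = -A49bracket β a b c d f y x) ∧
    (∀ x y z, A49bracket β a b c d f (A49bracket β a b c d f x y) z
      + A49bracket β a b c d f (A49bracket β a b c d f y z) x
      + A49bracket β a b c d f (A49bracket β a b c d f z x) y = 0) ∧
    (∀ (L : Type) [LieRing L] [LieAlgebra ℝ L] (e : Module.Basis (Fin 4) ℝ L),
      ⁅e 1, e 2⁆ = e 0 → ⁅e 0, e 3⁆ = (1 + β) • e 0 → ⁅e 1, e 3⁆ = e 1 →
      ⁅e 2, e 3⁆ = β • e 2 → ⁅e 0, e 1⁆ = 0 → ⁅e 0, e 2⁆ = 0 →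
      ∃ φ : (Fin 4 → ℝ) ≃ₗ[ℝ] L,
        ∀ x y, φ (A49bracket β a b c d f x y) = ⁅φ x, φ y⁆) := by
  have ha' : a ≠ 0 := ha.ne'
  have hb' : b ≠ 0 := hb.ne'
  refine ⟨?_, ?_, ?_⟩
  · intro x y
    funext i
    fin_cases i <;> (try simp [A49bracket, Matrix.vecHead, Matrix.vecTail]) <;> ring
  · intro x y z
    funext i
    fin_cases i <;> (try simp [A49bracket, Matrix.vecHead, Matrix.vecTail]) <;> ring
  · intro L _ _ e h12 h03 h13 h23 h01 h02
    set n : ℝ := (a * d - c * f) / a ^ 2 with hn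
    set M : Matrix (Fin 4) (Fin 4) ℝ :=
      Matrix.of ![![1, 0, n, 0], ![0, 1, f / a, 0], ![0, 0, b, c], ![0, 0, 0, a]] with hM
    set M' : Matrix (Fin 4) (Fin 4) ℝ :=
      Matrix.of ![![1, 0, -n / b, n * c / (a * b)],
        ![0, 1, -f / (a * b), f * c / (a ^ 2 * b)],
        ![0, 0, 1 / b, -c / (a * b)],
        ![0, 0, 0, 1 / a]] with hM'
    have hMM' : M * M' = 1 := by
      ext i j
      rw [Matrix.mul_apply, Fin.sum_univ_four]
      fin_cases i <;> fin_cases j <;>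
        (try simp [hM, hM', Matrix.one_apply, Matrix.vecHead, Matrix.vecTail]) <;>
        (try field_simp) <;> ring
    have hM'M : M' * M = 1 := by
      ext i j
      rw [Matrix.mul_apply, Fin.sum_univ_four]
      fin_cases i <;> fin_cases j <;>
        (try simp [hM, hM', Matrix.one_apply, Matrix.vecHead, Matrix.vecTail]) <;>
        (try field_simp) <;> ring
    have hInv : Invertible M := ⟨M', hM'M, hMM'⟩
    let T : (Fin 4 → ℝ) ≃ₗ[ℝ] (Fin 4 → ℝ) := Matrix.toLinearEquiv' M hInv
    refine ⟨T.trans e.equivFun.symm, ?_⟩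
    have hT : ∀ x : Fin 4 → ℝ, (T.trans e.equivFun.symm) x
        = (x 0 + n * x 2) • e 0 + (x 1 + f / a * x 2) • e 1
          + (b * x 2 + c * x 3) • e 2 + (a * x 3) • e 3 := by
      intro x
      have h1 : T x = M.mulVec x := by
        show (T : Module.End ℝ (Fin 4 → ℝ)) x = M.mulVec x
        rw [Matrix.toLinearEquiv'_apply, Matrix.toLin'_apply]
      have h2 : M.mulVec x = ![x 0 + n * x 2, x 1 + f / a * x 2, b * x 2 + c * x 3, a * x 3] := by
        funext i
        fin_cases i <;>
          simp [Matrix.mulVec, dotProduct, Fin.sum_univ_four, hM,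
            Matrix.vecHead, Matrix.vecTail] <;> ring
      rw [LinearEquiv.trans_apply, h1, h2, Module.Basis.equivFun_symm_apply, Fin.sum_univ_four]
      simp
    have h21 : ⁅e 2, e 1⁆ = -e 0 := by rw [← lie_skew, h12]
    have h30 : ⁅e 3, e 0⁆ = -((1 + β) • e 0) := by rw [← lie_skew, h03]
    have h31 : ⁅e 3, e 1⁆ = -e 1 := by rw [← lie_skew, h13]
    have h32 : ⁅e 3, e 2⁆ = -(β • e 2) := by rw [← lie_skew, h23]
    have h10 : ⁅e 1, e 0⁆ = 0 := by rw [← lie_skew, h01, neg_zero]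
    have h20 : ⁅e 2, e 0⁆ = 0 := by rw [← lie_skew, h02, neg_zero]
    intro x y
    rw [hT, hT, hT]
    simp only [A49bracket, Matrix.cons_val_zero, Matrix.cons_val_one, Matrix.head_cons,
      Matrix.cons_val_two, Matrix.tail_cons, Matrix.cons_val_three]
    simp only [lie_add, add_lie, lie_smul, smul_lie, lie_self, h12, h03, h13, h23, h01, h02,
      h21, h30, h31, h32, h10, h20, smul_zero, add_zero, zero_add, smul_neg, smul_smul]
    clear_value T M' M n
    clear hT hInv hMM' hM'M hM hM'
    match_scalars
    all_goals try rw [hn]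
    all_goals field_simp
    all_goals ring
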